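/- Let β > 1 and let g : 𝕋 → 𝕋 be Lipschitz with constant c, i.e. |g(x) − g(y)| ≤ c|x − y| for all x, y ∈ 𝕋. Let n ≥ 1 and let I_{n,β}(w) be a full cylinder of order n. Then for every ε > c·β^{−n}, there exists a point x ∈ I_{n,β}(w) such that |T_β^n(x) − g(x)| < ε. -/
import Mathlib


/-- The β-transformation `x ↦ βx - ⌊βx⌋` on `[0,1)`. -/
noncomputable def betaT (β : ℝ) : ℝ → ℝ := fun x => Int.fract (β * x)

/-- The usual metric on the torus `𝕋 = ℝ/ℤ`: distance from `a - b` to the nearest integer. -/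
noncomputable def tdist (a b : ℝ) : ℝ := ⨅ k : ℤ, |a - b - (k : ℝ)|

/-- The cylinder of order `n` (with respect to base `β`) determined by the word `w`:
`I_{n,β}(w) = {x ∈ [0,1) : ε_i(x,β) = w_i, 1 ≤ i ≤ n}`. -/
noncomputable def cylinder (β : ℝ) (n : ℕ) (w : Fin n → ℤ) : Set ℝ :=
  {x | x ∈ Set.Ico (0 : ℝ) 1 ∧ ∀ i : Fin n, ⌊β * (betaT β)^[(i : ℕ)] x⌋ = w i}

lemma tdist_bdd (a b : ℝ) : BddBelow (Set.range fun k : ℤ => |a - b - (k : ℝ)|) :=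
  ⟨0, by rintro y ⟨k, rfl⟩; positivity⟩

lemma tdist_le_abs (a b : ℝ) : tdist a b ≤ |a - b| := by
  have := ciInf_le (tdist_bdd a b) (0 : ℤ)
  simpa [tdist] using this

lemma tdist_int_sub (a b : ℝ) (m : ℤ) : tdist (a - m) b = tdist a b := by
  unfold tdist
  apply le_antisymm
  · refine le_ciInf fun k => ?_
    refine ciInf_le_of_le (tdist_bdd _ _) (k - m) (le_of_eq ?_)
    congr 1; push_cast; ring
  · refine le_ciInf fun k => ?_
    refine ciInf_le_of_le (tdist_bdd _ _) (k + m) (le_of_eq ?_)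
    congr 1; push_cast; ring

lemma tdist_nonneg (a b : ℝ) : 0 ≤ tdist a b :=
  le_ciInf fun k => abs_nonneg _

lemma iter_sub {β : ℝ} {n : ℕ} {w : Fin n → ℤ} {x y : ℝ}
    (hx : x ∈ cylinder β n w) (hy : y ∈ cylinder β n w) :
    ∀ k, k ≤ n → (betaT β)^[k] x - (betaT β)^[k] y = β ^ k * (x - y) := by
  intro k
  induction k with
  | zero => simp
  | succ k ih =>
    intro hk
    have hk' : k < n := hk
    have hx' := hx.2 ⟨k, hk'⟩
    have hy' := hy.2 ⟨k, hk'⟩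
    simp only at hx' hy'
    have ihk := ih (le_of_lt hk')
    rw [Function.iterate_succ_apply', Function.iterate_succ_apply']
    simp only [betaT, Int.fract]
    rw [hx', hy', pow_succ]
    linarith [mul_comm β (β ^ k), congrArg (β * ·) ihk]

/-- **Hitting lemma on full cylinders.** Let `β > 1` and let `g : 𝕋 → 𝕋` be Lipschitz with
constant `c`. For every full cylinder `I_{n,β}(w)` (an interval `[a, a + β^{-n})`) and every
`ε > c β^{-n}`, there is `x ∈ I_{n,β}(w)` with `|T_β^n(x) - g(x)| < ε`. -/
theorem exists_approx_on_full_cylinder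
    (β : ℝ) (hβ : 1 < β) (c : ℝ) (hc : 0 ≤ c) (g : ℝ → ℝ)
    (hg : ∀ x ∈ Set.Ico (0 : ℝ) 1, ∀ y ∈ Set.Ico (0 : ℝ) 1,
      tdist (g x) (g y) ≤ c * tdist x y)
    (n : ℕ) (hn : 1 ≤ n) (w : Fin n → ℤ)
    (hfull : ∃ a : ℝ, cylinder β n w = Set.Ico a (a + (β ^ n)⁻¹))
    (ε : ℝ) (hε : c * (β ^ n)⁻¹ < ε) :
    ∃ x ∈ cylinder β n w, tdist ((betaT β)^[n] x) (g x) < ε := by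
  obtain ⟨a, ha⟩ := hfull
  have hβn : (0:ℝ) < β ^ n := by positivity
  have hinv : (0:ℝ) < (β ^ n)⁻¹ := by positivity
  have haC : a ∈ cylinder β n w := by
    rw [ha]; exact ⟨le_refl a, by linarith⟩
  -- T^n of any point in cylinder lies in [0,1)
  have hT01 : ∀ z : ℝ, z ∈ cylinder β n w → (betaT β)^[n] z ∈ Set.Ico (0:ℝ) 1 := by
    intro z hz
    obtain ⟨m, rfl⟩ := Nat.exists_eq_add_of_le hn
    rw [add_comm, Function.iterate_succ_apply']
    exact ⟨Int.fract_nonneg _, Int.fract_lt_one _⟩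
  -- T^n a = 0
  have hTa : (betaT β)^[n] a = 0 := by
    by_contra h
    have ht0 : 0 < (betaT β)^[n] a := lt_of_le_of_ne (hT01 a haC).1 (Ne.symm h)
    generalize htdef : (betaT β)^[n] a = t at ht0 h ⊢
    have ht1 : t < 1 := htdef ▸ (hT01 a haC).2
    obtain ⟨x, hxdef⟩ : ∃ x : ℝ, x = a + (1 - t) * (β ^ n)⁻¹ := ⟨_, rfl⟩
    have hxC : x ∈ cylinder β n w := by
      rw [ha]
      constructor
      · nlinarith [mul_nonneg (by linarith : (0:ℝ) ≤ 1 - t) hinv.le, hxdef]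
      · have h5 : (1 - t) * (β ^ n)⁻¹ < (β ^ n)⁻¹ := by nlinarith
        linarith [hxdef]
    have hsub := iter_sub hxC haC n le_rfl
    have : (betaT β)^[n] x = 1 := by
      have hxa : x - a = (1 - t) * (β ^ n)⁻¹ := by rw [hxdef]; ring
      rw [hxa, htdef] at hsub
      have h6 : β ^ n * ((1 - t) * (β ^ n)⁻¹) = 1 - t := by
        field_simp
      linarith [hsub, h6]
    linarith [(hT01 x hxC).2, this]
  -- the point
  have hu0 : 0 ≤ Int.fract (g a) := Int.fract_nonneg _
  have hu1 : Int.fract (g a) < 1 := Int.fract_lt_one _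
  obtain ⟨u, hu⟩ : ∃ u : ℝ, u = Int.fract (g a) := ⟨_, rfl⟩
  rw [← hu] at hu0 hu1
  obtain ⟨x, hxdef⟩ : ∃ x : ℝ, x = a + u * (β ^ n)⁻¹ := ⟨_, rfl⟩
  have hxC : x ∈ cylinder β n w := by
    rw [ha]
    constructor
    · nlinarith [mul_nonneg hu0 hinv.le, hxdef]
    · have h5 : u * (β ^ n)⁻¹ < (β ^ n)⁻¹ := by nlinarith
      linarith [hxdef]
  refine ⟨x, hxC, ?_⟩
  have hsub := iter_sub hxC haC n le_rfl
  have hTx : (betaT β)^[n] x = u := by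
    have hxa : x - a = u * (β ^ n)⁻¹ := by rw [hxdef]; ring
    rw [hxa, hTa] at hsub
    have : β ^ n * (u * (β ^ n)⁻¹) = u := by field_simp
    linarith [hsub, this]
  rw [hTx]
  have heq : tdist u (g x) = tdist (g a) (g x) := by
    have : u = g a - (⌊g a⌋ : ℤ) := hu
    rw [this, tdist_int_sub]
  rw [heq]
  have h1 := hg a haC.1 x hxC.1
  have h2 : tdist a x ≤ |a - x| := tdist_le_abs a x
  have h3 : |a - x| = u * (β ^ n)⁻¹ := by
    rw [abs_sub_comm]
    have : x - a = u * (β ^ n)⁻¹ := by rw [hxdef]; ring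
    rw [this, abs_of_nonneg (by positivity)]
  calc tdist (g a) (g x) ≤ c * tdist a x := h1
    _ ≤ c * (u * (β ^ n)⁻¹) := by rw [← h3]; exact mul_le_mul_of_nonneg_left h2 hc
    _ ≤ c * (β ^ n)⁻¹ := by
        apply mul_le_mul_of_nonneg_left _ hc
        nlinarith
    _ < ε := hε
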